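/- A rooted binary tree T with n leaves minimizes N_a among all rooted binary trees with n leaves if and only if T minimizes the Colless index among all rooted binary trees with n leaves. -/

import Mathlib

/-- Rooted binary trees: a leaf, or an internal vertex with two child subtrees. -/
inductive BTree where
  | leaf : BTree
  | node : BTree → BTree → BTree
deriving DecidableEq

namespace BTree

/-- Number of leaves of a rooted binary tree. -/
def numLeaves : BTree → ℕ
  | leaf => 1
  | node l r => numLeaves l + numLeaves r

/-- Sackin index: sum over internal vertices `v` of `n_{v_a} + n_{v_b}`. -/
def sackin : BTree → ℕ
  | leaf => 0
  | node l r => sackin l + sackin r + (numLeaves l + numLeaves r)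

/-- Colless index: sum over internal vertices `v` of `|n_{v_a} - n_{v_b}|`. -/
def colless : BTree → ℕ
  | leaf => 0
  | node l r =>
      colless l + colless r +
        (max (numLeaves l) (numLeaves r) - min (numLeaves l) (numLeaves r))

/-- `N_a`: sum over internal vertices of the larger child-subtree leaf count. -/
def Na : BTree → ℕ
  | leaf => 0
  | node l r => Na l + Na r + max (numLeaves l) (numLeaves r)

/-- `N_b`: sum over internal vertices of the smaller child-subtree leaf count. -/
def Nb : BTree → ℕ
  | leaf => 0
  | node l r => Nb l + Nb r + min (numLeaves l) (numLeaves r)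

/-- `Δ_CS = C - S`, as an integer. -/
def deltaCS (T : BTree) : ℤ := (colless T : ℤ) - (sackin T : ℤ)

/-- Caterpillar trees: every internal vertex has at least one leaf child. -/
def isCaterpillar : BTree → Prop
  | leaf => True
  | node l r => (l = leaf ∧ isCaterpillar r) ∨ (r = leaf ∧ isCaterpillar l)

/-- The fully balanced tree of height `h`. -/
def fbTree : ℕ → BTree
  | 0 => leaf
  | h + 1 => node (fbTree h) (fbTree h)

end BTree

namespace BTreeAux

open BTree

/-! ### Minimal value functions -/

def cfun : ℕ → ℕ
  | 0 => 0
  | 1 => 0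
  | (n+2) => cfun ((n+3)/2) + cfun ((n+2)/2) + (n+2) % 2
termination_by n => n
decreasing_by all_goals omega

def sfun : ℕ → ℕ
  | 0 => 0
  | 1 => 0
  | (n+2) => sfun ((n+3)/2) + sfun ((n+2)/2) + (n+2)
termination_by n => n
decreasing_by all_goals omega

lemma cfun_rec {n : ℕ} (h : 2 ≤ n) :
    cfun n = cfun ((n+1)/2) + cfun (n/2) + n % 2 := by
  obtain ⟨m, rfl⟩ : ∃ m, n = m + 2 := ⟨n - 2, by omega⟩
  rw [cfun]

lemma sfun_rec {n : ℕ} (h : 2 ≤ n) :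
    sfun n = sfun ((n+1)/2) + sfun (n/2) + n := by
  obtain ⟨m, rfl⟩ : ∃ m, n = m + 2 := ⟨n - 2, by omega⟩
  rw [sfun]

lemma cfun_zero : cfun 0 = 0 := by rw [cfun]
lemma cfun_one : cfun 1 = 0 := by rw [cfun]
lemma sfun_zero : sfun 0 = 0 := by rw [sfun]
lemma sfun_one : sfun 1 = 0 := by rw [sfun]

/-! ### `Nat.clog` facts -/

lemma clog_half {m : ℕ} (h : 2 ≤ m) : Nat.clog 2 m = Nat.clog 2 ((m+1)/2) + 1 := by
  rw [Nat.clog_of_two_le (by norm_num) h]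
  norm_num

lemma clog_succ_half {k : ℕ} (h : 1 ≤ k) : Nat.clog 2 (k+1) = Nat.clog 2 (k/2 + 1) + 1 := by
  rw [Nat.clog_of_two_le (by norm_num) (by omega)]
  have h2 : (k + 1 + 2 - 1) / 2 = k/2 + 1 := by omega
  rw [h2]

lemma clog_two_two : Nat.clog 2 2 = 1 := by
  simp [Nat.clog_of_two_le]

lemma clog_two_le_iff {m : ℕ} : 2 ≤ Nat.clog 2 m ↔ 3 ≤ m := by
  constructor
  · intro h
    by_contra hm
    push_neg at hm
    have : Nat.clog 2 m ≤ Nat.clog 2 2 := Nat.clog_mono_right _ (by omega)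
    simp [Nat.clog_of_two_le] at this
    omega
  · intro h
    have h3 : Nat.clog 2 3 = 2 := by
      rw [Nat.clog_of_two_le (by norm_num) (by norm_num)]
      norm_num
    calc 2 = Nat.clog 2 3 := h3.symm
    _ ≤ Nat.clog 2 m := Nat.clog_mono_right _ h

/-! ### Subadditivity of `cfun` (B1) -/

lemma B1aux : ∀ N a b, a + b ≤ N → a ≤ b → cfun (a + b) ≤ cfun a + cfun b + (b - a) := by
  intro N
  induction N with
  | zero =>
    intro a b h hab
    obtain ⟨rfl, rfl⟩ : a = 0 ∧ b = 0 := by omega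
    simp [cfun_zero]
  | succ N ih =>
    intro a b hN hab
    rcases Nat.eq_zero_or_pos a with rfl | ha
    · simp [cfun_zero]
    rcases Nat.lt_or_ge b (a + 2) with hb | hb
    · have h2 : 2 ≤ a + b := by omega
      rw [cfun_rec h2]
      rcases Nat.eq_or_lt_of_le hab with rfl | h
      · have e1 : (a + a + 1)/2 = a := by omega
        have e2 : (a + a)/2 = a := by omega
        rw [e1, e2]; omega
      · have hb1 : b = a + 1 := by omega
        subst hb1
        have e1 : (a + (a+1) + 1)/2 = a + 1 := by omega
        have e2 : (a + (a+1))/2 = a := by omega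
        rw [e1, e2]; omega
    · rcases Nat.eq_or_lt_of_le ha with ha1 | ha2
      · have ha1 : a = 1 := ha1.symm
        subst ha1
        have hbrec := cfun_rec (n := b) (by omega)
        have hrec := cfun_rec (n := 1 + b) (by omega)
        have e1 : (1 + b + 1)/2 = b/2 + 1 := by omega
        have e2 : (1 + b)/2 = (b+1)/2 := by omega
        rw [e1, e2] at hrec
        have hIH : cfun (1 + b/2) ≤ cfun 1 + cfun (b/2) + (b/2 - 1) := ih 1 (b/2) (by omega) (by omega)
        have e3 : 1 + b/2 = b/2 + 1 := by omega
        rw [e3] at hIH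
        rw [cfun_one] at *
        omega
      · have hrecA := cfun_rec (n := a) (by omega)
        have hrecB := cfun_rec (n := b) (by omega)
        have hrecN := cfun_rec (n := a + b) (by omega)
        have hIH1 : cfun ((a+1)/2 + b/2) ≤ cfun ((a+1)/2) + cfun (b/2) + (b/2 - (a+1)/2) :=
          ih _ _ (by omega) (by omega)
        have hIH2 : cfun (a/2 + (b+1)/2) ≤ cfun (a/2) + cfun ((b+1)/2) + ((b+1)/2 - a/2) :=
          ih _ _ (by omega) (by omega)
        have hsplit : ((a+1)/2 + b/2 = (a+b+1)/2 ∧ a/2 + (b+1)/2 = (a+b)/2) ∨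
            ((a+1)/2 + b/2 = (a+b)/2 ∧ a/2 + (b+1)/2 = (a+b+1)/2) := by omega
        rcases hsplit with ⟨e1, e2⟩ | ⟨e1, e2⟩ <;> rw [e1] at hIH1 <;> rw [e2] at hIH2 <;> omega

lemma B1 {a b : ℕ} (h : a ≤ b) : cfun (a + b) ≤ cfun a + cfun b + (b - a) :=
  B1aux (a+b) a b le_rfl h

/-! ### Strict inequality for bad splits (B2) -/

lemma B2aux : ∀ N k m, k + m ≤ N → 1 ≤ k → k ≤ m →
    Nat.clog 2 (k+1) < Nat.clog 2 m →
    cfun (k + m) + 1 ≤ cfun k + cfun m + (m - k) := by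
  intro N
  induction N with
  | zero => intro k m h _ _ _; omega
  | succ N ih =>
    intro k m hN hk hkm hbad
    have hck : 1 ≤ Nat.clog 2 (k+1) := by
      have : Nat.clog 2 2 ≤ Nat.clog 2 (k+1) := Nat.clog_mono_right _ (by omega)
      simp [Nat.clog_of_two_le] at this
      omega
    have hm3 : 3 ≤ m := clog_two_le_iff.mp (by omega)
    have hmk2 : k + 2 ≤ m := by
      by_contra hc
      push_neg at hc
      have : Nat.clog 2 m ≤ Nat.clog 2 (k+1) := Nat.clog_mono_right _ (by omega)
      omega
    rcases Nat.eq_or_lt_of_le hk with hk1 | hk2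
    · have hk1 : k = 1 := hk1.symm
      subst hk1
      have hbrec := cfun_rec (n := m) (by omega)
      have hrec := cfun_rec (n := 1 + m) (by omega)
      have e1 : (1 + m + 1)/2 = m/2 + 1 := by omega
      have e2 : (1 + m)/2 = (m+1)/2 := by omega
      rw [e1, e2] at hrec
      have hB1 : cfun (1 + m/2) ≤ cfun 1 + cfun (m/2) + (m/2 - 1) := B1 (by omega)
      have e3 : 1 + m/2 = m/2 + 1 := by omega
      rw [e3] at hB1
      rw [cfun_one] at *
      omega
    · have hrecA := cfun_rec (n := k) (by omega)
      have hrecB := cfun_rec (n := m) (by omega)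
      have hrecN := cfun_rec (n := k + m) (by omega)
      have hbad' : Nat.clog 2 (k/2 + 1) < Nat.clog 2 ((m+1)/2) := by
        have h1 := clog_succ_half (k := k) (by omega)
        have h2 := clog_half (m := m) (by omega)
        omega
      have hIH2 : cfun (k/2 + (m+1)/2) + 1 ≤ cfun (k/2) + cfun ((m+1)/2) + ((m+1)/2 - k/2) :=
        ih _ _ (by omega) (by omega) (by omega) hbad'
      have hB1' : cfun ((k+1)/2 + m/2) ≤ cfun ((k+1)/2) + cfun (m/2) + (m/2 - (k+1)/2) :=
        B1 (by omega)
      have hsplit : ((k+1)/2 + m/2 = (k+m+1)/2 ∧ k/2 + (m+1)/2 = (k+m)/2) ∨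
          ((k+1)/2 + m/2 = (k+m)/2 ∧ k/2 + (m+1)/2 = (k+m+1)/2) := by omega
      rcases hsplit with ⟨e1, e2⟩ | ⟨e1, e2⟩ <;> rw [e1] at hB1' <;> rw [e2] at hIH2 <;> omega

lemma B2 {k m : ℕ} (hk : 1 ≤ k) (hkm : k ≤ m) (hbad : Nat.clog 2 (k+1) < Nat.clog 2 m) :
    cfun (k + m) + 1 ≤ cfun k + cfun m + (m - k) :=
  B2aux (k+m) k m le_rfl hk hkm hbad

/-! ### Subadditivity of `sfun` (A1) -/

lemma A1aux : ∀ N a b, a + b ≤ N → a ≤ b → sfun (a + b) ≤ sfun a + sfun b + (a + b) := by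
  intro N
  induction N with
  | zero =>
    intro a b h hab
    obtain ⟨rfl, rfl⟩ : a = 0 ∧ b = 0 := by omega
    simp [sfun_zero]
  | succ N ih =>
    intro a b hN hab
    rcases Nat.eq_zero_or_pos a with rfl | ha
    · simp [sfun_zero]
    rcases Nat.lt_or_ge b (a + 2) with hb | hb
    · have h2 : 2 ≤ a + b := by omega
      rw [sfun_rec h2]
      rcases Nat.eq_or_lt_of_le hab with rfl | h
      · have e1 : (a + a + 1)/2 = a := by omega
        have e2 : (a + a)/2 = a := by omega
        rw [e1, e2]
      · have hb1 : b = a + 1 := by omega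
        subst hb1
        have e1 : (a + (a+1) + 1)/2 = a + 1 := by omega
        have e2 : (a + (a+1))/2 = a := by omega
        rw [e1, e2]; omega
    · rcases Nat.eq_or_lt_of_le ha with ha1 | ha2
      · have ha1 : a = 1 := ha1.symm
        subst ha1
        have hbrec := sfun_rec (n := b) (by omega)
        have hrec := sfun_rec (n := 1 + b) (by omega)
        have e1 : (1 + b + 1)/2 = b/2 + 1 := by omega
        have e2 : (1 + b)/2 = (b+1)/2 := by omega
        rw [e1, e2] at hrec
        have hIH : sfun (1 + b/2) ≤ sfun 1 + sfun (b/2) + (1 + b/2) := ih 1 (b/2) (by omega) (by omega)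
        have e3 : 1 + b/2 = b/2 + 1 := by omega
        rw [e3] at hIH
        rw [sfun_one] at *
        omega
      · have hrecA := sfun_rec (n := a) (by omega)
        have hrecB := sfun_rec (n := b) (by omega)
        have hrecN := sfun_rec (n := a + b) (by omega)
        have hIH1 : sfun ((a+1)/2 + b/2) ≤ sfun ((a+1)/2) + sfun (b/2) + ((a+1)/2 + b/2) :=
          ih _ _ (by omega) (by omega)
        have hIH2 : sfun (a/2 + (b+1)/2) ≤ sfun (a/2) + sfun ((b+1)/2) + (a/2 + (b+1)/2) :=
          ih _ _ (by omega) (by omega)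
        have hsplit : ((a+1)/2 + b/2 = (a+b+1)/2 ∧ a/2 + (b+1)/2 = (a+b)/2) ∨
            ((a+1)/2 + b/2 = (a+b)/2 ∧ a/2 + (b+1)/2 = (a+b+1)/2) := by omega
        rcases hsplit with ⟨e1, e2⟩ | ⟨e1, e2⟩ <;> rw [e1] at hIH1 <;> rw [e2] at hIH2 <;> omega

lemma A1 (a b : ℕ) : sfun (a + b) ≤ sfun a + sfun b + (a + b) := by
  rcases le_total a b with h | h
  · exact A1aux (a+b) a b le_rfl h
  · have := A1aux (b+a) b a le_rfl h
    have e : b + a = a + b := by omega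
    rw [e] at this
    omega

/-! ### Good splits achieve the Sackin minimum exactly (A2) -/

lemma A2aux : ∀ N k m, k + m ≤ N → 1 ≤ k → 1 ≤ m →
    Nat.clog 2 m ≤ Nat.clog 2 (k+1) → Nat.clog 2 k ≤ Nat.clog 2 (m+1) →
    sfun k + sfun m + (k + m) = sfun (k + m) := by
  intro N
  induction N with
  | zero => intro k m h _ _ _ _; omega
  | succ N ih =>
    intro k m hN hk hm h1 h2
    have s2 : sfun 2 = 2 := by
      rw [sfun_rec (by norm_num)]; norm_num [sfun_one]
    have s3 : sfun 3 = 5 := by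
      rw [sfun_rec (by norm_num)]
      norm_num [sfun_one, s2]
    rcases Nat.lt_or_ge k 2 with hk1 | hk2
    · have hk1 : k = 1 := by omega
      subst hk1
      have hm2 : m ≤ 2 := by
        by_contra hc
        have := clog_two_le_iff (m := m) |>.mpr (by omega)
        rw [clog_two_two] at h1
        omega
      interval_cases m
      · rw [sfun_one]; rw [(by norm_num : (1:ℕ) + 1 = 2), s2]
      · rw [sfun_one, s2, (by norm_num : (1:ℕ) + 2 = 3), s3]
    rcases Nat.lt_or_ge m 2 with hm1 | hm2
    · have hm1 : m = 1 := by omega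
      subst hm1
      have hk2' : k ≤ 2 := by
        by_contra hc
        have := clog_two_le_iff (m := k) |>.mpr (by omega)
        rw [clog_two_two] at h2
        omega
      have hk2'' : k = 2 := by omega
      subst hk2''
      rw [sfun_one, s2, (by norm_num : (2:ℕ) + 1 = 3), s3]
    · have hrecK := sfun_rec (n := k) (by omega)
      have hrecM := sfun_rec (n := m) (by omega)
      have hrecN := sfun_rec (n := k + m) (by omega)
      have idK := clog_half (m := k) (by omega)
      have idM := clog_half (m := m) (by omega)
      have idK1 := clog_succ_half (k := k) (by omega)
      have idM1 := clog_succ_half (k := m) (by omega)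
      have mo1 : Nat.clog 2 (k/2) ≤ Nat.clog 2 ((k+1)/2) := Nat.clog_mono_right _ (by omega)
      have mo2 : Nat.clog 2 (m/2) ≤ Nat.clog 2 ((m+1)/2) := Nat.clog_mono_right _ (by omega)
      have mo3 : Nat.clog 2 (k/2 + 1) ≤ Nat.clog 2 ((k+1)/2 + 1) := Nat.clog_mono_right _ (by omega)
      have mo4 : Nat.clog 2 (m/2 + 1) ≤ Nat.clog 2 ((m+1)/2 + 1) := Nat.clog_mono_right _ (by omega)
      have mo5 : Nat.clog 2 ((k+1)/2) ≤ Nat.clog 2 (k/2 + 1) := Nat.clog_mono_right _ (by omega)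
      have mo6 : Nat.clog 2 ((m+1)/2) ≤ Nat.clog 2 (m/2 + 1) := Nat.clog_mono_right _ (by omega)
      have hIH1 : sfun ((k+1)/2) + sfun (m/2) + ((k+1)/2 + m/2) = sfun ((k+1)/2 + m/2) :=
        ih _ _ (by omega) (by omega) (by omega) (by omega) (by omega)
      have hIH2 : sfun (k/2) + sfun ((m+1)/2) + (k/2 + (m+1)/2) = sfun (k/2 + (m+1)/2) :=
        ih _ _ (by omega) (by omega) (by omega) (by omega) (by omega)
      have hsplit : ((k+1)/2 + m/2 = (k+m+1)/2 ∧ k/2 + (m+1)/2 = (k+m)/2) ∨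
          ((k+1)/2 + m/2 = (k+m)/2 ∧ k/2 + (m+1)/2 = (k+m+1)/2) := by omega
      rcases hsplit with ⟨e1, e2⟩ | ⟨e1, e2⟩ <;> rw [e1] at hIH1 <;> rw [e2] at hIH2 <;> omega

lemma A2 {k m : ℕ} (hk : 1 ≤ k) (hm : 1 ≤ m)
    (h1 : Nat.clog 2 m ≤ Nat.clog 2 (k+1)) (h2 : Nat.clog 2 k ≤ Nat.clog 2 (m+1)) :
    sfun k + sfun m + (k + m) = sfun (k + m) :=
  A2aux (k+m) k m le_rfl hk hm h1 h2

/-! ### Tree lemmas -/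

lemma numLeaves_pos : ∀ T : BTree, 1 ≤ numLeaves T := by
  intro T
  induction T with
  | leaf => simp [numLeaves]
  | node l r ihl ihr => simp [numLeaves]; omega

/-- A maximally balanced tree with `n` leaves. -/
def bal : ℕ → BTree
  | 0 => .leaf
  | 1 => .leaf
  | (n+2) => .node (bal ((n+3)/2)) (bal ((n+2)/2))
termination_by n => n
decreasing_by all_goals omega

lemma bal_rec {n : ℕ} (h : 2 ≤ n) : bal n = .node (bal ((n+1)/2)) (bal (n/2)) := by
  obtain ⟨m, rfl⟩ : ∃ m, n = m + 2 := ⟨n - 2, by omega⟩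
  rw [bal]

lemma bal_spec : ∀ N n, n ≤ N → 1 ≤ n →
    numLeaves (bal n) = n ∧ sackin (bal n) = sfun n ∧ colless (bal n) = cfun n := by
  intro N
  induction N with
  | zero => intro n h h1; omega
  | succ N ih =>
    intro n hN h1
    rcases Nat.lt_or_ge n 2 with h2 | h2
    · have : n = 1 := by omega
      subst this
      have hb : bal 1 = .leaf := by rw [bal]
      rw [hb]
      exact ⟨rfl, by rw [sfun_one]; rfl, by rw [cfun_one]; rfl⟩
    · rw [bal_rec h2]
      obtain ⟨hL1, hL2, hL3⟩ := ih ((n+1)/2) (by omega) (by omega)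
      obtain ⟨hR1, hR2, hR3⟩ := ih (n/2) (by omega) (by omega)
      have hord : n/2 ≤ (n+1)/2 := by omega
      refine ⟨?_, ?_, ?_⟩
      · simp only [numLeaves, hL1, hR1]; omega
      · simp only [sackin, hL1, hR1, hL2, hR2]
        rw [sfun_rec h2]
        omega
      · simp only [colless, hL1, hR1, hL3, hR3]
        rw [Nat.max_eq_left hord, Nat.min_eq_right hord, cfun_rec h2]
        omega

lemma colless_lb : ∀ T : BTree, cfun (numLeaves T) ≤ colless T := by
  intro T
  induction T with
  | leaf => simp [numLeaves, colless, cfun_one]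
  | node l r ihl ihr =>
    simp only [colless, numLeaves]
    rcases le_total (numLeaves l) (numLeaves r) with h | h
    · have hB := B1 h
      rw [Nat.max_eq_right h, Nat.min_eq_left h]
      omega
    · have hB := B1 h
      have e : numLeaves r + numLeaves l = numLeaves l + numLeaves r := by omega
      rw [e] at hB
      rw [Nat.max_eq_left h, Nat.min_eq_right h]
      omega

lemma sackin_lb : ∀ T : BTree, sfun (numLeaves T) ≤ sackin T := by
  intro T
  induction T with
  | leaf => simp [numLeaves, sackin, sfun_one]
  | node l r ihl ihr =>
    simp only [sackin, numLeaves]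
    have hA := A1 (numLeaves l) (numLeaves r)
    omega

/-- Key lemma: a Colless-minimal tree is Sackin-minimal. -/
lemma key : ∀ T : BTree, colless T = cfun (numLeaves T) → sackin T = sfun (numLeaves T) := by
  intro T
  induction T with
  | leaf => intro _; simp [numLeaves, sackin, sfun_one]
  | node l r ihl ihr =>
    intro h
    have hk := numLeaves_pos l
    have hm := numLeaves_pos r
    have hcl := colless_lb l
    have hcr := colless_lb r
    simp only [colless, numLeaves] at h
    simp only [sackin, numLeaves]
    rcases le_total (numLeaves l) (numLeaves r) with hord | hord
    · rw [Nat.max_eq_right hord, Nat.min_eq_left hord] at h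
      have hB := B1 hord
      have heqL : colless l = cfun (numLeaves l) := by omega
      have heqR : colless r = cfun (numLeaves r) := by omega
      have hgood : Nat.clog 2 (numLeaves r) ≤ Nat.clog 2 (numLeaves l + 1) := by
        by_contra hc
        push_neg at hc
        have := B2 hk hord hc
        omega
      have hgood2 : Nat.clog 2 (numLeaves l) ≤ Nat.clog 2 (numLeaves r + 1) :=
        le_trans (Nat.clog_mono_right _ hord) (Nat.clog_mono_right _ (by omega))
      have hA2 := A2 hk hm hgood hgood2
      rw [ihl heqL, ihr heqR]
      exact hA2
    · rw [Nat.max_eq_left hord, Nat.min_eq_right hord] at h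
      have hB := B1 hord
      have e : numLeaves r + numLeaves l = numLeaves l + numLeaves r := by omega
      rw [e] at hB
      have heqL : colless l = cfun (numLeaves l) := by omega
      have heqR : colless r = cfun (numLeaves r) := by omega
      have hgood : Nat.clog 2 (numLeaves l) ≤ Nat.clog 2 (numLeaves r + 1) := by
        by_contra hc
        push_neg at hc
        have := B2 hm hord hc
        rw [e] at this
        omega
      have hgood2 : Nat.clog 2 (numLeaves r) ≤ Nat.clog 2 (numLeaves l + 1) :=
        le_trans (Nat.clog_mono_right _ hord) (Nat.clog_mono_right _ (by omega))
      have hA2 := A2 hm hk hgood hgood2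
      have e2 : numLeaves r + numLeaves l = numLeaves l + numLeaves r := by omega
      rw [e2] at hA2
      rw [ihl heqL, ihr heqR]
      omega

/-- `C + S = 2 * N_a`. -/
lemma colless_add_sackin : ∀ T : BTree, colless T + sackin T = 2 * Na T := by
  intro T
  induction T with
  | leaf => rfl
  | node l r ihl ihr =>
    simp only [colless, sackin, Na]
    rcases le_total (numLeaves l) (numLeaves r) with h | h
    · rw [Nat.max_eq_right h, Nat.min_eq_left h]
      omega
    · rw [Nat.max_eq_left h, Nat.min_eq_right h]
      omega

end BTreeAux

open BTree in
/-- `T` minimizes `N_a` among trees with `n` leaves iff `T` minimizes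
the Colless index among trees with `n` leaves. -/
theorem Na_min_iff_colless_min (T : BTree) :
    (∀ T' : BTree, numLeaves T' = numLeaves T → Na T ≤ Na T') ↔
    (∀ T' : BTree, numLeaves T' = numLeaves T → colless T ≤ colless T') := by
  constructor
  · intro hNa T' hT'
    have hn : 1 ≤ numLeaves T := BTreeAux.numLeaves_pos T
    obtain ⟨hb1, hb2, hb3⟩ := BTreeAux.bal_spec (numLeaves T) (numLeaves T) le_rfl hn
    have h1 := hNa (BTreeAux.bal (numLeaves T)) hb1
    have h2 := BTreeAux.colless_add_sackin T
    have h3 := BTreeAux.colless_add_sackin (BTreeAux.bal (numLeaves T))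
    have h4 := BTreeAux.sackin_lb T
    have h5 := BTreeAux.colless_lb T'
    rw [hT'] at h5
    rw [hb2, hb3] at h3
    omega
  · intro hC T' hT'
    have hn : 1 ≤ numLeaves T := BTreeAux.numLeaves_pos T
    obtain ⟨hb1, hb2, hb3⟩ := BTreeAux.bal_spec (numLeaves T) (numLeaves T) le_rfl hn
    have h1 := hC (BTreeAux.bal (numLeaves T)) hb1
    rw [hb3] at h1
    have h2 := BTreeAux.colless_lb T
    have hceq : colless T = BTreeAux.cfun (numLeaves T) := le_antisymm h1 h2
    have hseq := BTreeAux.key T hceq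
    have h3 := BTreeAux.colless_add_sackin T
    have h4 := BTreeAux.colless_add_sackin T'
    have h5 := hC T' hT'
    have h6 := BTreeAux.sackin_lb T'
    rw [hT'] at h6
    omega
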